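/- Let X be a k-algebra and A ⊆ X a subalgebra, B a k-module with X ≅ B ⊗ A as right A-modules, and suppose Hom(B,A) carries an (A,X)-bimodule structure. Then the functor Hom(B,−) : Mod-A → Mod-X is right adjoint to the restriction functor F : Mod-X → Mod-A, via the natural isomorphism η_{M,N} : Hom_X(M, Hom(B,N)) → Hom_A(M,N), η(f)(m) = f(m)(1_B), with inverse η^{-1}(g)(m)(b) = g(m·b). -/

import Mathlib

open TensorProduct LinearMap

noncomputable section

variable (k A C : Type*) [CommRing k] [Ring A] [Algebra k A]
  [AddCommGroup C] [Module k C] [Coalgebra k C]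

/-- An entwining structure `(A,C)_ψ` over `k`. -/
structure Entwining where
  psi : C ⊗[k] A →ₗ[k] A ⊗[k] C
  mul_compat :
    psi ∘ₗ lTensor C (LinearMap.mul' k A)
      = rTensor C (LinearMap.mul' k A)
        ∘ₗ (TensorProduct.assoc k A A C).symm.toLinearMap
        ∘ₗ lTensor A psi
        ∘ₗ (TensorProduct.assoc k A C A).toLinearMap
        ∘ₗ rTensor A psi
        ∘ₗ (TensorProduct.assoc k C A A).symm.toLinearMap
  one_compat : ∀ c : C, psi (c ⊗ₜ[k] (1 : A)) = (1 : A) ⊗ₜ[k] c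
  comul_compat :
    lTensor A (Coalgebra.comul (R := k) (A := C)) ∘ₗ psi
      = (TensorProduct.assoc k A C C).toLinearMap
        ∘ₗ rTensor C psi
        ∘ₗ (TensorProduct.assoc k C A C).symm.toLinearMap
        ∘ₗ lTensor C psi
        ∘ₗ (TensorProduct.assoc k C C A).toLinearMap
        ∘ₗ rTensor A (Coalgebra.comul (R := k) (A := C))
  counit_compat : ∀ (c : C) (a : A),
    (TensorProduct.rid k A)
        ((lTensor A (Coalgebra.counit (R := k) (A := C))) (psi (c ⊗ₜ[k] a)))
      = Coalgebra.counit (R := k) c • a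

variable {k A C} in
/-- `act` is a unital associative right `A`-action on `M`. -/
def IsRAction {M : Type*} [AddCommGroup M] [Module k M]
    (act : M ⊗[k] A →ₗ[k] M) : Prop :=
  (∀ m : M, act (m ⊗ₜ[k] (1 : A)) = m) ∧
  act ∘ₗ lTensor M (LinearMap.mul' k A)
    = act ∘ₗ rTensor A act ∘ₗ (TensorProduct.assoc k M A A).symm.toLinearMap

variable {k A C} in
/-- `coact` is a counital coassociative right `C`-coaction on `M`. -/
def IsRCoaction {M : Type*} [AddCommGroup M] [Module k M]
    (coact : M →ₗ[k] M ⊗[k] C) : Prop :=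
  (∀ m : M, (TensorProduct.rid k M)
      ((lTensor M (Coalgebra.counit (R := k) (A := C))) (coact m)) = m) ∧
  rTensor C coact ∘ₗ coact
    = (TensorProduct.assoc k M C C).symm.toLinearMap
      ∘ₗ lTensor M (Coalgebra.comul (R := k) (A := C)) ∘ₗ coact

variable {k A C} in
/-- The compatibility condition making `(M, act, coact)` an entwined
`(A,C)_ψ`-module: `ρ^M(m·a) = m₍₀₎·a_α ⊗ m₍₁₎^α`. -/
def IsEntwinedModule (E : Entwining k A C) {M : Type*} [AddCommGroup M] [Module k M]
    (act : M ⊗[k] A →ₗ[k] M) (coact : M →ₗ[k] M ⊗[k] C) : Prop :=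
  IsRAction act ∧ IsRCoaction coact ∧
  coact ∘ₗ act
    = rTensor C act
      ∘ₗ (TensorProduct.assoc k M A C).symm.toLinearMap
      ∘ₗ lTensor M E.psi
      ∘ₗ (TensorProduct.assoc k M C A).toLinearMap
      ∘ₗ rTensor A coact

variable {k A C} in
/-- A morphism of entwined modules: right `A`-linear and right `C`-colinear. -/
def IsEntwinedHom {M N : Type*} [AddCommGroup M] [Module k M]
    [AddCommGroup N] [Module k N]
    (actM : M ⊗[k] A →ₗ[k] M) (coactM : M →ₗ[k] M ⊗[k] C)
    (actN : N ⊗[k] A →ₗ[k] N) (coactN : N →ₗ[k] N ⊗[k] C)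
    (f : M →ₗ[k] N) : Prop :=
  (f ∘ₗ actM = actN ∘ₗ rTensor A f) ∧ (coactN ∘ₗ f = rTensor C f ∘ₗ coactM)

variable {k A C} in
/-- Evaluation of the first (dual) factor at `c`: `ξ ⊗ a ↦ ξ(c) • a`. -/
def evFst (c : C) : Module.Dual k C ⊗[k] A →ₗ[k] A :=
  TensorProduct.lift ((LinearMap.lsmul k A) ∘ₗ
    (LinearMap.applyₗ (R := k) c : (C →ₗ[k] k) →ₗ[k] k))

variable {k A C} in
/-- Evaluation of the second (coalgebra) factor against `ξ`: `a ⊗ c ↦ ξ(c) • a`. -/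
def evSnd (ξ : Module.Dual k C) : A ⊗[k] C →ₗ[k] A :=
  (TensorProduct.rid k A).toLinearMap ∘ₗ lTensor A ξ

variable {k A C} in
/-- `ψ̄ : A ⊗ C* → C* ⊗ A` is a factorisation map for the entwining `ψ`:
`⟨c^α, ξ⟩ a_α = ξ_i(c) a^i`. -/
def IsFactorisation (E : Entwining k A C)
    (ψbar : A ⊗[k] Module.Dual k C →ₗ[k] Module.Dual k C ⊗[k] A) : Prop :=
  ∀ (a : A) (ξ : Module.Dual k C) (c : C),
    evFst c (ψbar (a ⊗ₜ[k] ξ)) = evSnd ξ (E.psi (c ⊗ₜ[k] a))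

/-- The product of `B = C^{*op}`, i.e. the opposite convolution product:
`⟨c, b b'⟩ = ⟨c₍₂₎, b⟩ ⟨c₍₁₎, b'⟩`, as a linear map `B ⊗ B →ₗ B`. -/
def opConv : Module.Dual k C ⊗[k] Module.Dual k C →ₗ[k] Module.Dual k C :=
  ((LinearMap.llcomp k C (C ⊗[k] C) k).flip (Coalgebra.comul (R := k) (A := C)))
  ∘ₗ (LinearMap.llcomp k (C ⊗[k] C) (k ⊗[k] k) k (LinearMap.mul' k k))
  ∘ₗ TensorProduct.homTensorHomMap (RingHom.id k) C C k k
  ∘ₗ (TensorProduct.comm k (Module.Dual k C) (Module.Dual k C)).toLinearMap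

variable {k A C} in
/-- The multiplication of the smash product `B #_ψ̄ A` on `B ⊗ A`, `B = C^{*op}`:
`(b ⊗ a)(b' ⊗ a') = b ψ̄(a ⊗ b') a'`. -/
def smashMul (ψbar : A ⊗[k] Module.Dual k C →ₗ[k] Module.Dual k C ⊗[k] A) :
    (Module.Dual k C ⊗[k] A) ⊗[k] (Module.Dual k C ⊗[k] A) →ₗ[k]
      Module.Dual k C ⊗[k] A :=
  rTensor A (opConv k C)
  ∘ₗ (TensorProduct.assoc k (Module.Dual k C) (Module.Dual k C) A).symm.toLinearMap
  ∘ₗ lTensor (Module.Dual k C) (lTensor (Module.Dual k C) (LinearMap.mul' k A))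
  ∘ₗ lTensor (Module.Dual k C) (TensorProduct.assoc k (Module.Dual k C) A A).toLinearMap
  ∘ₗ lTensor (Module.Dual k C) (rTensor A ψbar)
  ∘ₗ lTensor (Module.Dual k C) (TensorProduct.assoc k A (Module.Dual k C) A).symm.toLinearMap
  ∘ₗ (TensorProduct.assoc k (Module.Dual k C) A (Module.Dual k C ⊗[k] A)).toLinearMap

/-- The unit `ε ⊗ 1_A` of the smash product. -/
def smashOne : Module.Dual k C ⊗[k] A :=
  (Coalgebra.counit (R := k) (A := C)) ⊗ₜ[k] (1 : A)

variable {k A C} in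
/-- The map `X ⊗ B → X` underlying the right `X`-action on `Hom(B,N)`:
`(b ⊗ a) ⊗ b' ↦ (b b'_i) ⊗ a^i` where `ψ̄(a ⊗ b') = b'_i ⊗ a^i`. -/
def homActAux (ψbar : A ⊗[k] Module.Dual k C →ₗ[k] Module.Dual k C ⊗[k] A) :
    (Module.Dual k C ⊗[k] A) ⊗[k] Module.Dual k C →ₗ[k]
      Module.Dual k C ⊗[k] A :=
  rTensor A (opConv k C)
  ∘ₗ (TensorProduct.assoc k (Module.Dual k C) (Module.Dual k C) A).symm.toLinearMap
  ∘ₗ lTensor (Module.Dual k C) ψbar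
  ∘ₗ (TensorProduct.assoc k (Module.Dual k C) A (Module.Dual k C)).toLinearMap

variable {k A C} in
/-- The right `X`-action on `Hom(B,N)` (`X = B #_ψ̄ A`, `B = C^{*op}`, `N` a
right `A`-module): `(f · (b ⊗ a))(b') = f(b b'_i) · a^i`. -/
def homAct {N : Type*} [AddCommGroup N] [Module k N]
    (actN : N ⊗[k] A →ₗ[k] N)
    (ψbar : A ⊗[k] Module.Dual k C →ₗ[k] Module.Dual k C ⊗[k] A)
    (f : Module.Dual k C →ₗ[k] N) (x : Module.Dual k C ⊗[k] A) :
    Module.Dual k C →ₗ[k] N :=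
  actN ∘ₗ rTensor A f ∘ₗ homActAux ψbar
    ∘ₗ TensorProduct.mk k (Module.Dual k C ⊗[k] A) (Module.Dual k C) x

variable {k A C} in
/-- `actX` is a unital associative right action of the smash product
`X = B #_ψ̄ A` on `M`. -/
def IsSmashAction (ψbar : A ⊗[k] Module.Dual k C →ₗ[k] Module.Dual k C ⊗[k] A)
    {M : Type*} [AddCommGroup M] [Module k M]
    (actX : M ⊗[k] (Module.Dual k C ⊗[k] A) →ₗ[k] M) : Prop :=
  (∀ m : M, actX (m ⊗ₜ[k] smashOne k A C) = m) ∧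
  actX ∘ₗ lTensor M (smashMul ψbar)
    = actX ∘ₗ rTensor (Module.Dual k C ⊗[k] A) actX
      ∘ₗ (TensorProduct.assoc k M (Module.Dual k C ⊗[k] A)
          (Module.Dual k C ⊗[k] A)).symm.toLinearMap

variable {k A C} in
/-- `f : M → Hom(B,N)` is a morphism of right `X`-modules. -/
def IsHomBXLinear (ψbar : A ⊗[k] Module.Dual k C →ₗ[k] Module.Dual k C ⊗[k] A)
    {M N : Type*} [AddCommGroup M] [Module k M] [AddCommGroup N] [Module k N]
    (actX : M ⊗[k] (Module.Dual k C ⊗[k] A) →ₗ[k] M)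
    (actN : N ⊗[k] A →ₗ[k] N)
    (f : M →ₗ[k] (Module.Dual k C →ₗ[k] N)) : Prop :=
  ∀ (m : M) (x : Module.Dual k C ⊗[k] A),
    f (actX (m ⊗ₜ[k] x)) = homAct actN ψbar (f m) x

/-!
The unit and counit axioms of `ψ`, read through the factorisation identity (which pins down
`ψ̄` because `C` is finite projective), give `ψ̄(a ⊗ ε) = ε ⊗ a` and `ψ̄(1 ⊗ b) = b ⊗ 1`. So
`A` sits in `X` as `ε ⊗ A`, `B` as `B ⊗ 1`, and `b ⊗ a = (b ⊗ 1)(ε ⊗ a)`. An `X`-linear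
`f : M → Hom(B, N)` is then recovered from `m ↦ f m ε` through `f m b = f (m · (b ⊗ 1)) ε`;
conversely an `A`-linear `g` lifts to `m ↦ (b ↦ g (m · (b ⊗ 1)))`, which is `X`-linear by
associativity of the `X`-action.
-/

section

variable {k A C : Type*} [CommRing k] [Ring A] [Algebra k A] [AddCommGroup C] [Module k C]

lemma evFst_eq_dualTensorHom (c : C) (u : Module.Dual k C ⊗[k] A) :
    evFst c u = dualTensorHom k C A u c := by
  induction u using TensorProduct.induction_on with
  | zero => simp
  | tmul ξ a => simp [evFst, dualTensorHom_apply]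
  | add u v hu hv => simp [map_add, hu, hv]

variable [Coalgebra k C]

local notation "ε" => Coalgebra.counit (R := k) (A := C)

lemma opConv_tmul_apply (b b' : Module.Dual k C) (c : C) :
    opConv k C (b ⊗ₜ[k] b') c = LinearMap.mul' k k (map b' b (Coalgebra.comul c)) := by
  simp [opConv]

lemma opConv_counit_tmul (ξ : Module.Dual k C) : opConv k C (ε ⊗ₜ[k] ξ) = ξ := by
  ext c
  rw [opConv_tmul_apply, ← rTensor_comp_lTensor, LinearMap.comp_apply,
    Coalgebra.lTensor_counit_comul]
  simp [LinearMap.mul'_apply]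

lemma opConv_tmul_counit (ξ : Module.Dual k C) : opConv k C (ξ ⊗ₜ[k] ε) = ξ := by
  ext c
  rw [opConv_tmul_apply, ← lTensor_comp_rTensor, LinearMap.comp_apply,
    Coalgebra.rTensor_counit_comul]
  simp [LinearMap.mul'_apply]

variable {E : Entwining k A C} {ψbar : A ⊗[k] Module.Dual k C →ₗ[k] Module.Dual k C ⊗[k] A}

/-- As `C` is finite projective, `C* ⊗ A → Hom(C, A)` is injective, so the factorisation
identity determines `ψbar` from `ψ`. -/
lemma IsFactorisation.eq_of_evFst [Module.Finite k C] [Module.Projective k C]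
    (hfact : IsFactorisation E ψbar) {a : A} {ξ : Module.Dual k C}
    {u : Module.Dual k C ⊗[k] A} (h : ∀ c, evSnd ξ (E.psi (c ⊗ₜ[k] a)) = evFst c u) :
    ψbar (a ⊗ₜ[k] ξ) = u := by
  apply (dualTensorHom_bijective (R := k) (M := C) (N := A)).1
  ext c
  rw [← evFst_eq_dualTensorHom, ← evFst_eq_dualTensorHom, hfact, h]

lemma IsFactorisation.psibar_tmul_counit [Module.Finite k C] [Module.Projective k C]
    (hfact : IsFactorisation E ψbar) (a : A) : ψbar (a ⊗ₜ[k] ε) = ε ⊗ₜ[k] a :=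
  IsFactorisation.eq_of_evFst hfact fun c => by simp [evSnd, evFst, E.counit_compat]

lemma IsFactorisation.psibar_one_tmul [Module.Finite k C] [Module.Projective k C]
    (hfact : IsFactorisation E ψbar) (ξ : Module.Dual k C) :
    ψbar ((1 : A) ⊗ₜ[k] ξ) = ξ ⊗ₜ[k] (1 : A) :=
  IsFactorisation.eq_of_evFst hfact fun c => by simp [evSnd, evFst, E.one_compat]

lemma homActAux_tmul (b : Module.Dual k C) (a : A) (b' : Module.Dual k C) :
    homActAux ψbar ((b ⊗ₜ[k] a) ⊗ₜ[k] b')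
      = rTensor A (opConv k C ∘ₗ TensorProduct.mk k _ _ b) (ψbar (a ⊗ₜ[k] b')) := by
  simp only [homActAux, LinearMap.coe_comp, Function.comp_apply, LinearEquiv.coe_coe,
    assoc_tmul, lTensor_tmul]
  induction ψbar (a ⊗ₜ[k] b') using TensorProduct.induction_on with
  | zero => simp
  | tmul ξ c => simp
  | add u w hu hw => simp only [tmul_add, map_add, hu, hw]

lemma smashMul_tmul_tmul_one (x : Module.Dual k C ⊗[k] A) (b : Module.Dual k C) :
    smashMul ψbar (x ⊗ₜ[k] (b ⊗ₜ[k] (1 : A))) = homActAux ψbar (x ⊗ₜ[k] b) := by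
  induction x using TensorProduct.induction_on with
  | zero => simp
  | add u w hu hw => simp only [add_tmul, map_add, hu, hw]
  | tmul b₀ a =>
    rw [homActAux_tmul]
    simp only [smashMul, LinearMap.coe_comp, Function.comp_apply, LinearEquiv.coe_coe,
      assoc_tmul, assoc_symm_tmul, lTensor_tmul, rTensor_tmul]
    induction ψbar (a ⊗ₜ[k] b) using TensorProduct.induction_on with
    | zero => simp
    | tmul ξ c => simp [LinearMap.mul'_apply]
    | add u w hu hw => simp only [add_tmul, tmul_add, map_add, hu, hw]

variable [Module.Finite k C] [Module.Projective k C]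

lemma smashMul_tmul_one_counit_tmul (hfact : IsFactorisation E ψbar)
    (b : Module.Dual k C) (a : A) :
    smashMul ψbar ((b ⊗ₜ[k] (1 : A)) ⊗ₜ[k] (ε ⊗ₜ[k] a)) = b ⊗ₜ[k] a := by
  simp only [smashMul, LinearMap.coe_comp, Function.comp_apply, LinearEquiv.coe_coe,
    assoc_tmul, assoc_symm_tmul, lTensor_tmul, rTensor_tmul]
  rw [IsFactorisation.psibar_one_tmul hfact]
  simp [LinearMap.mul'_apply, opConv_tmul_counit]

lemma homActAux_counit_tmul_counit (hfact : IsFactorisation E ψbar) (a : A) :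
    homActAux ψbar ((ε ⊗ₜ[k] a) ⊗ₜ[k] ε) = ε ⊗ₜ[k] a := by
  rw [homActAux_tmul, IsFactorisation.psibar_tmul_counit hfact]
  simp [opConv_counit_tmul]

lemma homActAux_tmul_one_counit (hfact : IsFactorisation E ψbar) (b : Module.Dual k C) :
    homActAux ψbar ((b ⊗ₜ[k] (1 : A)) ⊗ₜ[k] ε) = b ⊗ₜ[k] (1 : A) := by
  rw [homActAux_tmul, IsFactorisation.psibar_one_tmul hfact]
  simp [opConv_tmul_counit]

end

section

variable {k A C : Type*} [CommRing k] [Ring A] [Algebra k A] [AddCommGroup C] [Module k C]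
  {ψbar : A ⊗[k] Module.Dual k C →ₗ[k] Module.Dual k C ⊗[k] A}
  {M N : Type*} [AddCommGroup M] [Module k M] [AddCommGroup N] [Module k N]
  {actX : M ⊗[k] (Module.Dual k C ⊗[k] A) →ₗ[k] M} {actN : N ⊗[k] A →ₗ[k] N}

variable (actX) in
def homBLift (g : M →ₗ[k] N) : M →ₗ[k] (Module.Dual k C →ₗ[k] N) :=
  TensorProduct.curry (g ∘ₗ actX ∘ₗ
    lTensor M ((TensorProduct.mk k (Module.Dual k C) A).flip (1 : A)))

lemma homBLift_apply (g : M →ₗ[k] N) (m : M) (b : Module.Dual k C) :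
    homBLift actX g m b = g (actX (m ⊗ₜ[k] (b ⊗ₜ[k] (1 : A)))) := by
  simp [homBLift]

variable [Coalgebra k C]

local notation "ε" => Coalgebra.counit (R := k) (A := C)

lemma homAct_apply (F : Module.Dual k C →ₗ[k] N) (x : Module.Dual k C ⊗[k] A)
    (b : Module.Dual k C) :
    homAct actN ψbar F x b = actN (rTensor A F (homActAux ψbar (x ⊗ₜ[k] b))) :=
  rfl

lemma IsSmashAction.act_smashMul (hX : IsSmashAction ψbar actX) (m : M)
    (x y : Module.Dual k C ⊗[k] A) :
    actX (m ⊗ₜ[k] smashMul ψbar (x ⊗ₜ[k] y)) = actX (actX (m ⊗ₜ[k] x) ⊗ₜ[k] y) := by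
  simpa using LinearMap.congr_fun hX.2 (m ⊗ₜ[k] (x ⊗ₜ[k] y))

lemma flip_homBLift_counit (hX : IsSmashAction ψbar actX) (g : M →ₗ[k] N) :
    (homBLift actX g).flip ε = g := by
  ext m
  rw [flip_apply, homBLift_apply]
  exact congrArg g (hX.1 m)

variable {E : Entwining k A C} [Module.Finite k C] [Module.Projective k C]

lemma IsHomBXLinear.flip_counit_act_counit_tmul (hfact : IsFactorisation E ψbar)
    {f : M →ₗ[k] (Module.Dual k C →ₗ[k] N)} (hf : IsHomBXLinear ψbar actX actN f)
    (m : M) (a : A) :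
    f.flip ε (actX (m ⊗ₜ[k] (ε ⊗ₜ[k] a))) = actN (f.flip ε m ⊗ₜ[k] a) := by
  rw [flip_apply, flip_apply, hf, homAct_apply, homActAux_counit_tmul_counit hfact,
    rTensor_tmul]

lemma IsHomBXLinear.homBLift_flip_counit (hfact : IsFactorisation E ψbar) (hN : IsRAction actN)
    {f : M →ₗ[k] (Module.Dual k C →ₗ[k] N)} (hf : IsHomBXLinear ψbar actX actN f) :
    homBLift actX (f.flip ε) = f := by
  ext m b
  rw [homBLift_apply, flip_apply, hf, homAct_apply, homActAux_tmul_one_counit hfact,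
    rTensor_tmul, hN.1]

variable {g : M →ₗ[k] N}

/-- In `X`, `b ⊗ a = (b ⊗ 1)(ε ⊗ a)`. -/
lemma actN_rTensor_homBLift (hfact : IsFactorisation E ψbar) (hX : IsSmashAction ψbar actX)
    (hg : ∀ (m : M) (a : A), g (actX (m ⊗ₜ[k] (ε ⊗ₜ[k] a))) = actN (g m ⊗ₜ[k] a))
    (m : M) (u : Module.Dual k C ⊗[k] A) :
    actN (rTensor A (homBLift actX g m) u) = g (actX (m ⊗ₜ[k] u)) := by
  induction u using TensorProduct.induction_on with
  | zero => simp
  | tmul b a =>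
    rw [rTensor_tmul, homBLift_apply, ← hg, ← hX.act_smashMul,
      smashMul_tmul_one_counit_tmul hfact]
  | add u w hu hw => simp only [map_add, tmul_add, hu, hw]

lemma isHomBXLinear_homBLift (hfact : IsFactorisation E ψbar) (hX : IsSmashAction ψbar actX)
    (hg : ∀ (m : M) (a : A), g (actX (m ⊗ₜ[k] (ε ⊗ₜ[k] a))) = actN (g m ⊗ₜ[k] a)) :
    IsHomBXLinear ψbar actX actN (homBLift actX g) := by
  intro m x
  ext b
  rw [homBLift_apply, ← hX.act_smashMul, smashMul_tmul_tmul_one, homAct_apply,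
    actN_rTensor_homBLift hfact hX hg]

end

/-- `Hom(B,−)` is right adjoint to the restriction functor
`Mod-X → Mod-A` along `A ⊆ X = B #_ψ̄ A`, via
`η(f)(m) = f(m)(1_B)` with inverse `η⁻¹(g)(m)(b) = g(m·b)`. -/
theorem homB_right_adjoint [Module.Finite k C] [Module.Projective k C]
    (E : Entwining k A C)
    (ψbar : A ⊗[k] Module.Dual k C →ₗ[k] Module.Dual k C ⊗[k] A)
    (hfact : IsFactorisation E ψbar)
    (M : Type*) [AddCommGroup M] [Module k M]
    (actX : M ⊗[k] (Module.Dual k C ⊗[k] A) →ₗ[k] M)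
    (hX : IsSmashAction ψbar actX)
    (N : Type*) [AddCommGroup N] [Module k N]
    (actN : N ⊗[k] A →ₗ[k] N) (hN : IsRAction actN) :
    -- `η(f)(m) = f(m)(1_B)`, with `1_B = ε`:
    let η : (M →ₗ[k] (Module.Dual k C →ₗ[k] N)) → (M →ₗ[k] N) :=
      fun f => f.flip (Coalgebra.counit (R := k) (A := C))
    -- `η⁻¹(g)(m)(b) = g(m · (b ⊗ 1_A))`:
    let ν : (M →ₗ[k] N) → (M →ₗ[k] (Module.Dual k C →ₗ[k] N)) :=
      fun g => TensorProduct.curry (g ∘ₗ actX ∘ₗ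
        lTensor M ((TensorProduct.mk k (Module.Dual k C) A).flip (1 : A)))
    -- `η f` is `A`-linear whenever `f` is `X`-linear:
    (∀ f, IsHomBXLinear ψbar actX actN f →
      ∀ (m : M) (a : A),
        η f (actX (m ⊗ₜ[k] ((Coalgebra.counit (R := k) (A := C)) ⊗ₜ[k] a)))
          = actN (η f m ⊗ₜ[k] a)) ∧
    -- `ν ∘ η = id` on `X`-linear maps:
    (∀ f, IsHomBXLinear ψbar actX actN f → ν (η f) = f) ∧
    -- `ν g` is `X`-linear and `η (ν g) = g` for `A`-linear `g`:
    (∀ g : M →ₗ[k] N,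
      (∀ (m : M) (a : A),
        g (actX (m ⊗ₜ[k] ((Coalgebra.counit (R := k) (A := C)) ⊗ₜ[k] a)))
          = actN (g m ⊗ₜ[k] a)) →
      IsHomBXLinear ψbar actX actN (ν g) ∧ η (ν g) = g) ∧
    -- naturality of `η` in `N` and in `M`:
    (∀ (N' : Type) (_ : AddCommGroup N') (_ : Module k N')
      (actN' : N' ⊗[k] A →ₗ[k] N') (α : N →ₗ[k] N'),
      (∀ (n : N) (a : A), α (actN (n ⊗ₜ[k] a)) = actN' (α n ⊗ₜ[k] a)) →
      ∀ f : M →ₗ[k] (Module.Dual k C →ₗ[k] N),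
        (((LinearMap.llcomp k (Module.Dual k C) N N' α) ∘ₗ f).flip
            (Coalgebra.counit (R := k) (A := C)) : M →ₗ[k] N')
          = α ∘ₗ η f) ∧
    (∀ (M' : Type) (_ : AddCommGroup M') (_ : Module k M')
      (actX' : M' ⊗[k] (Module.Dual k C ⊗[k] A) →ₗ[k] M') (β : M' →ₗ[k] M),
      (∀ (m' : M') (x : Module.Dual k C ⊗[k] A),
        β (actX' (m' ⊗ₜ[k] x)) = actX (β m' ⊗ₜ[k] x)) →
      ∀ f : M →ₗ[k] (Module.Dual k C →ₗ[k] N),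
        ((f ∘ₗ β).flip (Coalgebra.counit (R := k) (A := C)) : M' →ₗ[k] N)
          = (η f) ∘ₗ β) := by
  intro η ν
  refine ⟨fun f hf => IsHomBXLinear.flip_counit_act_counit_tmul hfact hf,
    fun f hf => IsHomBXLinear.homBLift_flip_counit hfact hN hf,
    fun g hg => ⟨isHomBXLinear_homBLift hfact hX hg, flip_homBLift_counit hX g⟩,
    fun _ _ _ _ _ _ _ => rfl, fun _ _ _ _ _ _ _ => rfl⟩
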